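/- arXiv:1712.01459 — 4 statements merged into one kernel-verified Lean document; each statement's English description precedes it below -/
import Mathlib

section
/- If f is a locally integrable, eventually positive function on [0,∞) that is long-tailed (i.e., f(x−t) ∼ f(x) as x→∞ for every fixed t), then f(x) = o(∫₀ˣ f(y) dy) as x → ∞. -/
/-!
For `N > 0`, `(∫_{x-N}^x f) / f x = ∫_0^N f (x - t) / f x dt`, and the integrand tends to `1`
pointwise by long-tailedness, so Fatou's lemma gives `liminf (∫_{x-N}^x f) / f x ≥ N`.
Hence `∫_0^x f > c · f x` eventually, for every `c`.
-/
open Filter MeasureTheory Asymptotics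
open scoped ENNReal Topology

theorem eventually_lt_lintegral_of_tendsto {ι α : Type*} [MeasurableSpace α] {μ : Measure α}
    {l : Filter ι} [l.NeBot] [l.IsCountablyGenerated] {g : ι → α → ℝ≥0∞} {h : α → ℝ≥0∞}
    (hg : ∀ i, AEMeasurable (g i) μ) (hlim : ∀ a, Tendsto (fun i => g i a) l (𝓝 (h a)))
    {b : ℝ≥0∞} (hb : b < ∫⁻ a, h a ∂μ) : ∀ᶠ i in l, b < ∫⁻ a, g i a ∂μ := by
  refine eventually_lt_of_lt_liminf (hb.trans_le ?_)
  calc ∫⁻ a, h a ∂μ = ∫⁻ a, liminf (fun i => g i a) l ∂μ := by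
        simp only [fun a => (hlim a).liminf_eq]
    _ ≤ liminf (fun i => ∫⁻ a, g i a ∂μ) l := lintegral_liminf_le' hg

theorem integrableOn_Ioc_comp_sub {f : ℝ → ℝ} {x N : ℝ}
    (hfi : IntervalIntegrable f volume (x - N) x) :
    IntegrableOn (fun t => f (x - t)) (Set.Ioc 0 N) := by
  have := hfi.comp_sub_left x
  simp only [sub_sub_cancel, sub_self] at this
  exact this.symm.1

theorem lintegral_Ioc_ofReal_comp_sub_div {f : ℝ → ℝ} (hnn : ∀ x, 0 ≤ f x) {x N : ℝ} (hN : 0 ≤ N)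
    (hfi : IntervalIntegrable f volume (x - N) x) :
    ∫⁻ t in Set.Ioc 0 N, ENNReal.ofReal (f (x - t) / f x)
      = ENNReal.ofReal ((∫ y in (x - N)..x, f y) / f x) := by
  rw [← ofReal_integral_eq_lintegral_ofReal ((integrableOn_Ioc_comp_sub hfi).div_const _)
      (ae_of_all _ fun t => div_nonneg (hnn _) (hnn _)),
    integral_div, ← intervalIntegral.integral_of_le hN,
    intervalIntegral.integral_comp_sub_left, sub_zero]

theorem eventually_mul_lt_integral_of_longTailed {f : ℝ → ℝ} (hnn : ∀ x, 0 ≤ f x)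
    (hloc : ∀ a b : ℝ, IntervalIntegrable f volume a b)
    (hpos : ∀ᶠ x in atTop, 0 < f x)
    (hlong : ∀ t : ℝ, Tendsto (fun x => f (x - t) / f x) atTop (𝓝 1))
    {c N : ℝ} (hc : 0 ≤ c) (hcN : c < N) :
    ∀ᶠ x in atTop, c * f x < ∫ y in (x - N)..x, f y := by
  have hlim : ∀ t, Tendsto (fun x => ENNReal.ofReal (f (x - t) / f x)) atTop (𝓝 1) := fun t => by
    simpa [Function.comp_def] using ENNReal.tendsto_ofReal (hlong t)
  have hmeas : ∀ x, AEMeasurable (fun t => ENNReal.ofReal (f (x - t) / f x))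
      (volume.restrict (Set.Ioc 0 N)) := fun x =>
    ((integrableOn_Ioc_comp_sub (hloc _ _)).div_const _).aemeasurable.ennreal_ofReal
  have hvol : ENNReal.ofReal c < ∫⁻ _ in Set.Ioc 0 N, 1 := by
    rw [setLIntegral_const, one_mul, Real.volume_Ioc, sub_zero,
      ENNReal.ofReal_lt_ofReal_iff (hc.trans_lt hcN)]
    exact hcN
  filter_upwards [eventually_lt_lintegral_of_tendsto hmeas hlim hvol, hpos] with x hx hfx
  rw [lintegral_Ioc_ofReal_comp_sub_div hnn (hc.trans hcN.le) (hloc _ _),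
    ENNReal.ofReal_lt_ofReal_iff', lt_div_iff₀ hfx] at hx
  exact hx.1

/-- If `f` is a locally integrable, eventually positive, long-tailed function on `[0,∞)`
(viewed as a nonnegative function on `ℝ`), then `f(x) = o(∫₀ˣ f(y) dy)` as `x → ∞`. -/
theorem longTailed_isLittleO_integral (f : ℝ → ℝ)
    (hnn : ∀ x, 0 ≤ f x)
    (hloc : ∀ x : ℝ, IntervalIntegrable f volume 0 x)
    (hpos : ∀ᶠ x in atTop, 0 < f x)
    (hlong : ∀ t : ℝ, Tendsto (fun x => f (x - t) / f x) atTop (nhds 1)) :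
    (fun x => f x) =o[atTop] (fun x => ∫ y in (0:ℝ)..x, f y) := by
  have hint : ∀ a b : ℝ, IntervalIntegrable f volume a b := fun a b => (hloc a).symm.trans (hloc b)
  refine isLittleO_iff.2 fun ε hε => ?_
  have hε' : 0 < ε⁻¹ := inv_pos.2 hε
  filter_upwards [eventually_mul_lt_integral_of_longTailed hnn hint hpos hlong
    hε'.le (lt_add_one ε⁻¹), eventually_ge_atTop (ε⁻¹ + 1)] with x hx hxN
  have htail : ∫ y in (x - (ε⁻¹ + 1))..x, f y ≤ ∫ y in (0:ℝ)..x, f y :=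
    intervalIntegral.integral_mono_interval (by linarith) (by linarith) le_rfl
      (ae_of_all _ hnn) (hloc x)
  have hnorm : ‖∫ y in (0:ℝ)..x, f y‖ = ∫ y in (0:ℝ)..x, f y :=
    Real.norm_of_nonneg (intervalIntegral.integral_nonneg (by linarith) fun y _ => hnn y)
  rw [Real.norm_of_nonneg (hnn x), hnorm]
  calc f x = ε * (ε⁻¹ * f x) := by field_simp
    _ ≤ ε * ∫ y in (0:ℝ)..x, f y := by gcongr; linarith
end

section
/- Let f₁, f₂, f₃ be long-tailed functions on [0,∞) with ∫₀^∞ fᵢ(y) dy = ∞ for each i. If f₁(x) = o(f₂(x)) as x → ∞, then f₁⊗f₃(x) = o(f₂⊗f₃(x)) as x → ∞. -/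
open Filter MeasureTheory Asymptotics

/-- The convolution `u ⊗ v (x) = ∫₀ˣ u(x-y) v(y) dy`. -/
noncomputable def conv (u v : ℝ → ℝ) (x : ℝ) : ℝ := ∫ y in (0:ℝ)..x, u (x - y) * v y

/-- `f` is long-tailed: measurable, locally bounded, nonnegative, eventually positive,
and `f(x - t) ∼ f(x)` as `x → ∞` for each fixed `t`. -/
structure LongTailed (f : ℝ → ℝ) : Prop where
  meas : Measurable f
  nonneg : ∀ x, 0 ≤ f x
  locBdd : ∀ r : ℝ, ∃ C : ℝ, ∀ x ∈ Set.Icc (0:ℝ) r, f x ≤ C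
  evPos : ∀ᶠ x in atTop, 0 < f x
  tail : ∀ t : ℝ, Tendsto (fun x => f (x - t) / f x) atTop (nhds 1)

/-!
Fix `c > 0` and write `f₁ ⊗ f₃ (x) = ∫₀ˣ f₃(x - y) f₁(y) dy`, split at a point `A` beyond which
`f₁ ≤ (c/2) f₂`. The part over `[A, x]` is at most `(c/2) (f₂ ⊗ f₃)(x)`. The part over `[0, A]` is
`O(f₃(x))`, because `f₁` is bounded there and `f₃(x - y) ≤ (3/2) f₃(x)` uniformly in `y ∈ [0, A]`
for large `x`. The same uniformity gives `(f₂ ⊗ f₃)(x) ≥ (1/2) f₃(x) ∫₀ᴮ f₂` for every fixed `B`,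
and since `∫ f₂` diverges this dominates any `O(f₃(x))`.

The uniformity is the uniform convergence theorem for `g = log f₃`, obtained from Egorov's theorem:
for every `t ∈ [0, T]` there is an `s` with `t + s` and `s` outside the exceptional sets, and
`g(x - t) - g(x)` is the difference of the shifts of `g` by `t + s` at `x` and by `s` at `x - t`.
-/

open Set Topology

theorem tendstoUniformlyOn_const_iff_tendsto {ι α β : Type*} [UniformSpace β] {F : ι → α → β}
    {c : β} {p : Filter ι} {s : Set α} :
    TendstoUniformlyOn F (fun _ => c) p s ↔
      Tendsto (fun q : ι × α => F q.1 q.2) (p ×ˢ 𝓟 s) (𝓝 c) := by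
  rw [tendstoUniformlyOn_iff_tendsto, Uniform.tendsto_nhds_right]

theorem exists_mem_add_notMem_notMem_of_volume_add_lt {S E E' : Set ℝ}
    (h : volume E + volume E' < volume S) (a : ℝ) : ∃ s ∈ S, a + s ∉ E ∧ s ∉ E' := by
  by_contra! hS
  have hsub : S ⊆ (fun s => a + s) ⁻¹' E ∪ E' := fun s hs => by
    by_cases hE : a + s ∈ E
    · exact Or.inl hE
    · exact Or.inr (hS s hs hE)
  refine h.not_ge ?_
  calc volume S ≤ volume ((fun s => a + s) ⁻¹' E ∪ E') := measure_mono hsub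
    _ ≤ volume ((fun s => a + s) ⁻¹' E) + volume E' := measure_union_le _ _
    _ = volume E + volume E' := by rw [measure_preimage_add]

section UniformConvergence

variable {g : ℝ → ℝ}

theorem exists_tendsto_sub_prod_principal_Icc_diff (hg : Measurable g)
    (htail : ∀ t, Tendsto (fun x => g (x - t) - g x) atTop (𝓝 0)) {X : ℕ → ℝ}
    (hX : Tendsto X atTop atTop) (T : ℝ) {δ : ℝ} (hδ : 0 < δ) :
    ∃ E, volume E ≤ ENNReal.ofReal δ ∧
      Tendsto (fun q : ℕ × ℝ => g (X q.1 - q.2) - g (X q.1)) (atTop ×ˢ 𝓟 (Icc 0 T \ E)) (𝓝 0) := by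
  have hmeas (n : ℕ) : StronglyMeasurable fun s => g (X n - s) - g (X n) :=
    ((hg.comp (measurable_const.sub measurable_id)).sub measurable_const).stronglyMeasurable
  obtain ⟨E, -, -, hEvol, hunif⟩ := tendstoUniformlyOn_of_ae_tendsto hmeas stronglyMeasurable_const
    measurableSet_Icc (measure_Icc_lt_top (μ := volume)).ne
    (ae_of_all _ fun s _ => (htail s).comp hX) hδ
  exact ⟨E, hEvol, tendstoUniformlyOn_const_iff_tendsto.1 hunif⟩

theorem tendsto_sub_comp_of_tendsto_atTop (hg : Measurable g)
    (htail : ∀ t, Tendsto (fun x => g (x - t) - g x) atTop (𝓝 0)) {T : ℝ} (hT : 0 < T)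
    {X t : ℕ → ℝ} (hX : Tendsto X atTop atTop) (ht : ∀ᶠ n in atTop, t n ∈ Icc 0 T) :
    Tendsto (fun n => g (X n - t n) - g (X n)) atTop (𝓝 0) := by
  have hY : Tendsto (fun n => X n - t n) atTop atTop :=
    tendsto_atTop_mono' _ (ht.mono fun n htn => sub_le_sub_left htn.2 _)
      (tendsto_atTop_add_const_right _ _ hX)
  obtain ⟨E, hEvol, hE⟩ := exists_tendsto_sub_prod_principal_Icc_diff hg htail hX (2 * T)
    (show 0 < T / 4 by positivity)
  obtain ⟨E', hE'vol, hE'⟩ := exists_tendsto_sub_prod_principal_Icc_diff hg htail hY T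
    (show 0 < T / 4 by positivity)
  have hvol : volume E + volume E' < volume (Icc 0 T) := by
    calc volume E + volume E' ≤ ENNReal.ofReal (T / 4) + ENNReal.ofReal (T / 4) :=
          add_le_add hEvol hE'vol
      _ < volume (Icc 0 T) := by
        rw [← ENNReal.ofReal_add (by positivity) (by positivity), Real.volume_Icc,
          ENNReal.ofReal_lt_ofReal_iff (by linarith)]
        linarith
  choose s hs hsE hsE' using fun n => exists_mem_add_notMem_notMem_of_volume_add_lt hvol (t n)
  have hfar : Tendsto (fun n => g (X n - (t n + s n)) - g (X n)) atTop (𝓝 0) :=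
    hE.comp <| tendsto_id.prodMk <| tendsto_principal.2 <| ht.mono fun n htn =>
      ⟨⟨by linarith [htn.1, (hs n).1], by linarith [htn.2, (hs n).2]⟩, hsE n⟩
  have hnear : Tendsto (fun n => g (X n - t n - s n) - g (X n - t n)) atTop (𝓝 0) :=
    hE'.comp <| tendsto_id.prodMk <| tendsto_principal.2 <| Eventually.of_forall fun n =>
      ⟨hs n, hsE' n⟩
  simpa [sub_add_eq_sub_sub] using hfar.sub hnear

theorem tendsto_sub_prod_principal_Icc (hg : Measurable g)
    (htail : ∀ t, Tendsto (fun x => g (x - t) - g x) atTop (𝓝 0)) (T : ℝ) :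
    Tendsto (fun p : ℝ × ℝ => g (p.1 - p.2) - g p.1) (atTop ×ˢ 𝓟 (Icc 0 T)) (𝓝 0) := by
  refine (tendsto_iff_seq_tendsto.2 fun q hq => ?_).mono_left
    (prod_mono_right _ (principal_mono.2 (Icc_subset_Icc_right (le_max_left T 1))))
  obtain ⟨hX, ht⟩ := tendsto_prod_iff'.1 hq
  exact tendsto_sub_comp_of_tendsto_atTop hg htail (by positivity) hX (tendsto_principal.1 ht)

end UniformConvergence

theorem conv_comm (u v : ℝ → ℝ) (x : ℝ) : conv u v x = conv v u x := by
  have hflip :=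
    intervalIntegral.integral_comp_sub_left (fun y => v y * u (x - y)) x (a := 0) (b := x)
  simp only [sub_sub_cancel, sub_self, sub_zero] at hflip
  rw [conv, conv, hflip]
  congr 1 with y
  ring

theorem conv_nonneg {u v : ℝ → ℝ} (hu : ∀ y, 0 ≤ u y) (hv : ∀ y, 0 ≤ v y) {x : ℝ} (hx : 0 ≤ x) :
    0 ≤ conv u v x :=
  intervalIntegral.integral_nonneg hx fun _ _ => mul_nonneg (hu _) (hv _)

namespace LongTailed

variable {f u v w : ℝ → ℝ}

theorem tendsto_log_sub (h : LongTailed f) (t : ℝ) :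
    Tendsto (fun x => Real.log (f (x - t)) - Real.log (f x)) atTop (𝓝 0) := by
  have hlog : Tendsto (fun x => Real.log (f (x - t) / f x)) atTop (𝓝 0) := by
    simpa [Function.comp_def] using (Real.continuousAt_log one_ne_zero).tendsto.comp (h.tail t)
  refine hlog.congr' ?_
  filter_upwards [h.evPos, (tendsto_atTop_add_const_right atTop (-t) tendsto_id).eventually h.evPos]
    with x hx hxt
  exact Real.log_div hxt.ne' hx.ne'

theorem tendsto_div_prod_principal_Icc (h : LongTailed f) (T : ℝ) :
    Tendsto (fun p : ℝ × ℝ => f (p.1 - p.2) / f p.1) (atTop ×ˢ 𝓟 (Icc 0 T)) (𝓝 1) := by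
  have hexp := (Real.continuous_exp.tendsto 0).comp
    (tendsto_sub_prod_principal_Icc (Real.measurable_log.comp h.meas) h.tendsto_log_sub T)
  rw [Real.exp_zero] at hexp
  refine hexp.congr' ?_
  obtain ⟨x₀, hx₀⟩ := eventually_atTop.1 h.evPos
  filter_upwards [prod_mem_prod (Ici_mem_atTop (x₀ + T)) (mem_principal_self (Icc 0 T))]
    with p ⟨hp₁, hp₂⟩
  have hpos₁ : 0 < f p.1 := hx₀ _ (by linarith [mem_Ici.1 hp₁, hp₂.1, hp₂.2])
  have hpos₂ : 0 < f (p.1 - p.2) := hx₀ _ (by linarith [mem_Ici.1 hp₁, hp₂.2])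
  simp [Real.exp_sub, Real.exp_log hpos₁, Real.exp_log hpos₂]

theorem eventually_abs_sub_le (h : LongTailed f) (T : ℝ) {ε : ℝ} (hε : 0 < ε) :
    ∀ᶠ x in atTop, ∀ t ∈ Icc 0 T, |f (x - t) - f x| ≤ ε * f x := by
  have hball := (h.tendsto_div_prod_principal_Icc T).eventually (Metric.closedBall_mem_nhds 1 hε)
  filter_upwards [eventually_prod_principal_iff.1 hball, h.evPos] with x hx hpos t ht
  have hratio : |f (x - t) / f x - 1| ≤ ε := hx t ht
  calc |f (x - t) - f x| = |f (x - t) / f x - 1| * f x := by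
        rw [show f (x - t) - f x = (f (x - t) / f x - 1) * f x by field_simp, abs_mul,
          abs_of_pos hpos]
    _ ≤ ε * f x := mul_le_mul_of_nonneg_right hratio hpos.le

theorem intervalIntegrable (h : LongTailed f) {a b : ℝ} (ha : 0 ≤ a) (hb : 0 ≤ b) :
    IntervalIntegrable f volume a b := by
  obtain ⟨C, hC⟩ := h.locBdd (max a b)
  have hsub : uIcc a b ⊆ Icc 0 (max a b) :=
    uIcc_subset_Icc ⟨ha, le_max_left a b⟩ ⟨hb, le_max_right a b⟩
  refine (intervalIntegrable_const (c := C)).mono_fun h.meas.aestronglyMeasurable.restrict ?_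
  refine ae_restrict_of_forall_mem measurableSet_uIoc fun y hy => ?_
  show ‖f y‖ ≤ ‖C‖
  rw [Real.norm_of_nonneg (h.nonneg y)]
  exact (hC y (hsub (uIoc_subset_uIcc hy))).trans (Real.le_norm_self C)

theorem intervalIntegrable_comp_sub_mul (hu : LongTailed u) (hv : LongTailed v) {x a b : ℝ}
    (ha : a ∈ Icc 0 x) (hb : b ∈ Icc 0 x) :
    IntervalIntegrable (fun y => u (x - y) * v y) volume a b := by
  obtain ⟨Cu, hCu⟩ := hu.locBdd x
  obtain ⟨Cv, hCv⟩ := hv.locBdd x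
  have hmeas : Measurable fun y => u (x - y) * v y :=
    (hu.meas.comp (measurable_const.sub measurable_id)).mul hv.meas
  refine (intervalIntegrable_const (c := Cu * Cv)).mono_fun hmeas.aestronglyMeasurable.restrict ?_
  refine ae_restrict_of_forall_mem measurableSet_uIoc fun y hy => ?_
  have hy : y ∈ Icc 0 x := uIcc_subset_Icc ha hb (uIoc_subset_uIcc hy)
  have hxy : x - y ∈ Icc 0 x := ⟨by linarith [hy.2], by linarith [hy.1]⟩
  show ‖u (x - y) * v y‖ ≤ ‖Cu * Cv‖
  rw [Real.norm_of_nonneg (mul_nonneg (hu.nonneg _) (hv.nonneg y))]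
  exact (mul_le_mul (hCu _ hxy) (hCv y hy) (hv.nonneg y) ((hu.nonneg _).trans (hCu _ hxy))).trans
    (Real.le_norm_self _)

theorem mul_integral_le_conv (hv : LongTailed v) (hw : LongTailed w) {a B x : ℝ} (hB : 0 ≤ B)
    (hBx : B ≤ x) (ha : ∀ y ∈ Icc 0 B, a ≤ v (x - y)) :
    a * ∫ y in 0..B, w y ≤ conv v w x := by
  have hx : 0 ≤ x := hB.trans hBx
  rw [conv, ← intervalIntegral.integral_add_adjacent_intervals
    (hv.intervalIntegrable_comp_sub_mul hw ⟨le_rfl, hx⟩ ⟨hB, hBx⟩)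
    (hv.intervalIntegrable_comp_sub_mul hw ⟨hB, hBx⟩ ⟨hx, le_rfl⟩),
    ← intervalIntegral.integral_const_mul]
  have hhead : ∫ y in 0..B, a * w y ≤ ∫ y in 0..B, v (x - y) * w y :=
    intervalIntegral.integral_mono_on hB ((hw.intervalIntegrable le_rfl hB).const_mul a)
      (hv.intervalIntegrable_comp_sub_mul hw ⟨le_rfl, hx⟩ ⟨hB, hBx⟩)
      fun y hy => mul_le_mul_of_nonneg_right (ha y hy) (hw.nonneg y)
  have htail : 0 ≤ ∫ y in B..x, v (x - y) * w y :=
    intervalIntegral.integral_nonneg hBx fun y _ => mul_nonneg (hv.nonneg _) (hw.nonneg y)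
  linarith

theorem conv_le (hv : LongTailed v) (hu : LongTailed u) (hw : LongTailed w) {A b C k x : ℝ}
    (hA : 0 ≤ A) (hAx : A ≤ x) (hk : 0 ≤ k) (hvb : ∀ y ∈ Icc 0 A, v (x - y) ≤ b)
    (huC : ∀ y ∈ Icc 0 A, u y ≤ C) (huw : ∀ y, A ≤ y → u y ≤ k * w y) :
    conv v u x ≤ A * (b * C) + k * conv v w x := by
  have hx : 0 ≤ x := hA.trans hAx
  have hb : 0 ≤ b := (hv.nonneg _).trans (hvb 0 ⟨le_rfl, hA⟩)
  have hsplit (f : ℝ → ℝ) (hf : LongTailed f) :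
      conv v f x = (∫ y in 0..A, v (x - y) * f y) + ∫ y in A..x, v (x - y) * f y :=
    (intervalIntegral.integral_add_adjacent_intervals
      (hv.intervalIntegrable_comp_sub_mul hf ⟨le_rfl, hx⟩ ⟨hA, hAx⟩)
      (hv.intervalIntegrable_comp_sub_mul hf ⟨hA, hAx⟩ ⟨hx, le_rfl⟩)).symm
  have hhead : ∫ y in 0..A, v (x - y) * u y ≤ A * (b * C) := by
    calc ∫ y in 0..A, v (x - y) * u y ≤ ‖∫ y in 0..A, v (x - y) * u y‖ := Real.le_norm_self _
      _ ≤ b * C * |A - 0| := intervalIntegral.norm_integral_le_of_norm_le_const fun y hy => by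
          have hy : y ∈ Icc 0 A := Ioc_subset_Icc_self (by rwa [uIoc_of_le hA] at hy)
          rw [Real.norm_of_nonneg (mul_nonneg (hv.nonneg _) (hu.nonneg y))]
          exact mul_le_mul (hvb y hy) (huC y hy) (hu.nonneg y) hb
      _ = A * (b * C) := by rw [sub_zero, abs_of_nonneg hA, mul_comm]
  have htail : ∫ y in A..x, v (x - y) * u y ≤ k * ∫ y in A..x, v (x - y) * w y := by
    rw [← intervalIntegral.integral_const_mul]
    refine intervalIntegral.integral_mono_on hAx
      (hv.intervalIntegrable_comp_sub_mul hu ⟨hA, hAx⟩ ⟨hx, le_rfl⟩)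
      ((hv.intervalIntegrable_comp_sub_mul hw ⟨hA, hAx⟩ ⟨hx, le_rfl⟩).const_mul k) fun y hy => ?_
    calc v (x - y) * u y ≤ v (x - y) * (k * w y) :=
          mul_le_mul_of_nonneg_left (huw y hy.1) (hv.nonneg _)
      _ = k * (v (x - y) * w y) := by ring
  have hwhead : 0 ≤ ∫ y in 0..A, v (x - y) * w y :=
    intervalIntegral.integral_nonneg hA fun y _ => mul_nonneg (hv.nonneg _) (hw.nonneg y)
  rw [hsplit u hu, hsplit w hw]
  nlinarith

end LongTailed

theorem conv_isLittleO_of_isLittleO_general (f₁ f₂ f₃ : ℝ → ℝ)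
    (h1 : LongTailed f₁) (h2 : LongTailed f₂) (h3 : LongTailed f₃)
    (hdiv2 : Tendsto (fun x => ∫ y in (0:ℝ)..x, f₂ y) atTop atTop)
    (ho : (fun x => f₁ x) =o[atTop] (fun x => f₂ x)) :
    (fun x => conv f₁ f₃ x) =o[atTop] (fun x => conv f₂ f₃ x) := by
  refine isLittleO_iff.2 fun c hc => ?_
  obtain ⟨A, hA, hf₁f₂⟩ : ∃ A, 0 ≤ A ∧ ∀ y, A ≤ y → f₁ y ≤ c / 2 * f₂ y := by
    obtain ⟨A, hA⟩ := eventually_atTop.1 (isLittleO_iff.1 ho (half_pos hc))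
    refine ⟨max A 0, le_max_right _ _, fun y hy => ?_⟩
    simpa [abs_of_nonneg (h1.nonneg y), abs_of_nonneg (h2.nonneg y)] using
      hA y ((le_max_left _ _).trans hy)
  obtain ⟨C, hC⟩ := h1.locBdd A
  obtain ⟨B, hAB, hf₂B⟩ : ∃ B, A ≤ B ∧ 6 * A * C / c ≤ ∫ y in (0:ℝ)..B, f₂ y :=
    ((eventually_ge_atTop A).and (hdiv2.eventually_ge_atTop _)).exists
  filter_upwards [h3.eventually_abs_sub_le B one_half_pos, eventually_ge_atTop B] with x hx hBx
  have hlow : 1 / 2 * f₃ x * ∫ y in (0:ℝ)..B, f₂ y ≤ conv f₂ f₃ x := by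
    rw [conv_comm]
    exact h3.mul_integral_le_conv h2 (by linarith) hBx fun y hy => by
      linarith [(abs_le.1 (hx y hy)).1]
  have hup : conv f₁ f₃ x ≤ A * (3 / 2 * f₃ x * C) + c / 2 * conv f₂ f₃ x := by
    rw [conv_comm, conv_comm f₂]
    exact h3.conv_le h1 h2 hA (hAB.trans hBx) (by positivity)
      (fun y hy => by linarith [(abs_le.1 (hx y ⟨hy.1, hy.2.trans hAB⟩)).2]) hC hf₁f₂
  have hhead : A * (3 / 2 * f₃ x * C) ≤ c / 2 * conv f₂ f₃ x := by
    calc A * (3 / 2 * f₃ x * C) = c / 4 * f₃ x * (6 * A * C / c) := by field_simp; ring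
      _ ≤ c / 4 * f₃ x * ∫ y in (0:ℝ)..B, f₂ y :=
        mul_le_mul_of_nonneg_left hf₂B (mul_nonneg (by positivity) (h3.nonneg x))
      _ = c / 2 * (1 / 2 * f₃ x * ∫ y in (0:ℝ)..B, f₂ y) := by ring
      _ ≤ c / 2 * conv f₂ f₃ x := mul_le_mul_of_nonneg_left hlow (by positivity)
  have hx0 : 0 ≤ x := by linarith
  rw [Real.norm_of_nonneg (conv_nonneg h1.nonneg h3.nonneg hx0),
    Real.norm_of_nonneg (conv_nonneg h2.nonneg h3.nonneg hx0)]
  linarith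

/-- If `f₁, f₂, f₃` are long-tailed with divergent integrals and `f₁ = o(f₂)`, then
`f₁ ⊗ f₃ = o(f₂ ⊗ f₃)`. -/
theorem conv_isLittleO_of_isLittleO (f₁ f₂ f₃ : ℝ → ℝ)
    (h1 : LongTailed f₁) (h2 : LongTailed f₂) (h3 : LongTailed f₃)
    (hdiv1 : Tendsto (fun x => ∫ y in (0:ℝ)..x, f₁ y) atTop atTop)
    (hdiv2 : Tendsto (fun x => ∫ y in (0:ℝ)..x, f₂ y) atTop atTop)
    (hdiv3 : Tendsto (fun x => ∫ y in (0:ℝ)..x, f₃ y) atTop atTop)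
    (ho : (fun x => f₁ x) =o[atTop] (fun x => f₂ x)) :
    (fun x => conv f₁ f₃ x) =o[atTop] (fun x => conv f₂ f₃ x) :=
  conv_isLittleO_of_isLittleO_general f₁ f₂ f₃ h1 h2 h3 hdiv2 ho
end

section
/- Let V be a distribution on ℝ with tail V̄(x) ∼ e^{−αx} f(x) for some α > 0, where f = l∘exp with l slowly varying and f locally bounded. Then ∫₀^∞ e^{αy} V(dy) = ∞ if and only if ∫₀^∞ f(y) dy = ∞. -/
/-!
Layer cake: `∫_{(0,∞)} e^{αy} V(dy) = V̄(0) + ∫₀^∞ α e^{αx} V̄(x) dx`, and the tail assumption makes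
the integrand `α e^{αx} V̄(x)` asymptotically equivalent to `α f(x)`. Nonnegative functions that are
bounded on compacts and dominate each other at infinity have divergent integrals over `(0, ∞)`
simultaneously.
-/

open Filter MeasureTheory Asymptotics Set Real
open scoped ENNReal

theorem integral_mul_exp_mul (α y : ℝ) :
    ∫ t in 0..y, α * exp (α * t) = exp (α * y) - 1 := by
  have hderiv : ∀ t ∈ uIcc 0 y, HasDerivAt (fun s => exp (α * s)) (α * exp (α * t)) t :=
    fun t _ => by simpa [mul_comm] using ((hasDerivAt_id t).const_mul α).exp
  have hcont : Continuous fun t => α * exp (α * t) := by fun_prop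
  rw [intervalIntegral.integral_eq_sub_of_hasDerivAt hderiv (hcont.intervalIntegrable 0 y),
    mul_zero, exp_zero]

theorem setLIntegral_Ioi_ofReal_exp_mul (μ : Measure ℝ) [IsFiniteMeasure μ] {α : ℝ} (hα : 0 ≤ α) :
    ∫⁻ y in Ioi 0, ENNReal.ofReal (exp (α * y)) ∂μ =
      μ (Ioi 0) + ∫⁻ x in Ioi 0, ENNReal.ofReal (α * exp (α * x) * (μ (Ioi x)).toReal) := by
  have hcont : Continuous fun t => α * exp (α * t) := by fun_prop
  calc ∫⁻ y in Ioi 0, ENNReal.ofReal (exp (α * y)) ∂μ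
      = ∫⁻ y in Ioi 0, (1 + ENNReal.ofReal (∫ t in 0..y, α * exp (α * t))) ∂μ := by
        refine setLIntegral_congr_fun measurableSet_Ioi fun y (hy : 0 < y) => ?_
        rw [integral_mul_exp_mul, ← ENNReal.ofReal_one, ← ENNReal.ofReal_add zero_le_one
          (sub_nonneg.2 (one_le_exp (mul_nonneg hα hy.le))), add_sub_cancel]
    _ = μ (Ioi 0) + ∫⁻ y in Ioi 0, ENNReal.ofReal (∫ t in 0..y, α * exp (α * t)) ∂μ := by
        rw [lintegral_add_left measurable_const, setLIntegral_const, one_mul]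
    _ = μ (Ioi 0) + ∫⁻ x in Ioi 0, ENNReal.ofReal (α * exp (α * x) * (μ (Ioi x)).toReal) := by
        rw [lintegral_comp_eq_lintegral_meas_lt_mul (μ.restrict (Ioi 0)) (f := fun y => y)
          ((ae_restrict_iff' measurableSet_Ioi).2 (Eventually.of_forall fun y hy => le_of_lt hy))
          measurable_id.aemeasurable (fun t _ => hcont.intervalIntegrable _ _)
          (Eventually.of_forall fun t => mul_nonneg hα (exp_pos _).le)]
        congr 1
        refine setLIntegral_congr_fun measurableSet_Ioi fun t (ht : 0 < t) => ?_
        rw [ENNReal.ofReal_mul (mul_nonneg hα (exp_pos _).le),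
          ENNReal.ofReal_toReal (measure_ne_top μ _), mul_comm,
          Measure.restrict_apply' measurableSet_Ioi]
        congr 2
        exact inter_eq_left.2 (Ioi_subset_Ioi ht.le)

theorem setLIntegral_Ioi_eq_top_iff_of_le {g : ℝ → ℝ≥0∞} {a b : ℝ} (hab : a ≤ b)
    (hfin : ∫⁻ x in Ioc a b, g x ≠ ⊤) :
    ∫⁻ x in Ioi a, g x = ⊤ ↔ ∫⁻ x in Ioi b, g x = ⊤ := by
  rw [← Ioc_union_Ioi_eq_Ioi hab, lintegral_union measurableSet_Ioi (Ioc_disjoint_Ioi le_rfl),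
    ENNReal.add_eq_top]
  simp [hfin]

theorem setLIntegral_Ioc_ofReal_ne_top_of_le {g : ℝ → ℝ} {a b C : ℝ}
    (hC : ∀ x ∈ Icc a b, g x ≤ C) :
    ∫⁻ x in Ioc a b, ENNReal.ofReal (g x) ≠ ⊤ := by
  refine ne_top_of_le_ne_top ?_ (setLIntegral_mono' measurableSet_Ioc fun x hx =>
    ENNReal.ofReal_le_ofReal (hC x (Ioc_subset_Icc_self hx)))
  rw [setLIntegral_const]
  exact ENNReal.mul_ne_top ENNReal.ofReal_ne_top measure_Ioc_lt_top.ne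

theorem setLIntegral_Ioi_ofReal_eq_top_of_isBigO {g h : ℝ → ℝ} {a : ℝ}
    (hg : ∀ b, ∃ C, ∀ x ∈ Icc a b, g x ≤ C) (hh : 0 ≤ᶠ[atTop] h) (hgh : g =O[atTop] h)
    (htop : ∫⁻ x in Ioi a, ENNReal.ofReal (g x) = ⊤) :
    ∫⁻ x in Ioi a, ENNReal.ofReal (h x) = ⊤ := by
  obtain ⟨c, hc⟩ := hgh.bound
  obtain ⟨b, hb⟩ := eventually_atTop.1 (hc.and hh)
  obtain ⟨C, hC⟩ := hg (max a b)
  have htop' : ∫⁻ x in Ioi (max a b), ENNReal.ofReal (g x) = ⊤ :=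
    (setLIntegral_Ioi_eq_top_iff_of_le (le_max_left a b)
      (setLIntegral_Ioc_ofReal_ne_top_of_le hC)).1 htop
  have hle : ∫⁻ x in Ioi (max a b), ENNReal.ofReal (g x)
      ≤ ENNReal.ofReal c * ∫⁻ x in Ioi (max a b), ENNReal.ofReal (h x) := by
    rw [← lintegral_const_mul' _ _ ENNReal.ofReal_ne_top]
    refine setLIntegral_mono' measurableSet_Ioi fun x hx => ?_
    obtain ⟨hgx, hhx⟩ := hb x (le_max_right a b |>.trans hx.le)
    rw [← ENNReal.ofReal_mul' hhx, ← abs_of_nonneg hhx]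
    exact ENNReal.ofReal_le_ofReal ((le_abs_self _).trans hgx)
  rw [htop', top_le_iff, ENNReal.mul_eq_top] at hle
  obtain ⟨-, htop_h⟩ | ⟨hc_top, -⟩ := hle
  · exact top_le_iff.1 <| htop_h ▸ lintegral_mono_set (Ioi_subset_Ioi (le_max_left a b))
  · exact absurd hc_top ENNReal.ofReal_ne_top

theorem exp_moment_infinite_iff_general (μ : Measure ℝ) [IsProbabilityMeasure μ]
    (α : ℝ) (hα : 0 < α) (f : ℝ → ℝ)
    (hfnn : ∀ x, 0 ≤ f x)
    (hlb : ∀ r : ℝ, ∃ C : ℝ, ∀ x ∈ Set.Icc (0:ℝ) r, f x ≤ C)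
    (htail : (fun x => (μ (Set.Ioi x)).toReal) ~[atTop]
      (fun x => Real.exp (-α * x) * f x)) :
    (∫⁻ y in Set.Ioi (0:ℝ), ENNReal.ofReal (Real.exp (α * y)) ∂μ = ⊤) ↔
    (∫⁻ y in Set.Ioi (0:ℝ), ENNReal.ofReal (f y) = ⊤) := by
  set G : ℝ → ℝ := fun x => α * exp (α * x) * (μ (Ioi x)).toReal
  have hG_nonneg : ∀ x, 0 ≤ G x := fun x => by positivity
  have hG_bdd : ∀ b, ∃ C, ∀ x ∈ Icc 0 b, G x ≤ C := fun b =>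
    ⟨α * exp (α * b), fun x hx => calc
      G x ≤ α * exp (α * x) * 1 := mul_le_mul_of_nonneg_left measureReal_le_one (by positivity)
      _ ≤ α * exp (α * b) := by rw [mul_one]; gcongr; exact hx.2⟩
  have hG_equiv : G ~[atTop] fun x => α * f x := by
    refine ((IsEquivalent.refl (u := fun x => α * exp (α * x))).mul htail).congr_right
      (Eventually.of_forall fun x => ?_)
    calc α * exp (α * x) * (exp (-α * x) * f x) = α * exp (α * x + -α * x) * f x := by
          rw [exp_add]; ring
      _ = α * f x := by rw [neg_mul, add_neg_cancel, exp_zero, mul_one]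
  rw [setLIntegral_Ioi_ofReal_exp_mul μ hα.le, ENNReal.add_eq_top,
    or_iff_right (measure_ne_top μ _)]
  constructor
  · exact setLIntegral_Ioi_ofReal_eq_top_of_isBigO hG_bdd (Eventually.of_forall hfnn)
      (hG_equiv.isBigO.trans ((isBigO_refl f atTop).const_mul_left α))
  · exact setLIntegral_Ioi_ofReal_eq_top_of_isBigO hlb (Eventually.of_forall hG_nonneg)
      ((isBigO_self_const_mul hα.ne' f atTop).trans hG_equiv.isBigO_symm)

/-- For a distribution `V` on `ℝ` with tail `V̄(x) ∼ e^{-αx} f(x)`, `α > 0`,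
`f = l ∘ exp` with `l` slowly varying and `f` locally bounded:
`∫₀^∞ e^{αy} V(dy) = ∞` iff `∫₀^∞ f(y) dy = ∞`. -/
theorem exp_moment_infinite_iff (μ : Measure ℝ) [IsProbabilityMeasure μ]
    (α : ℝ) (hα : 0 < α) (f l : ℝ → ℝ)
    (hl : ∀ t : ℝ, 0 < t → Tendsto (fun x => l (x * t) / l x) atTop (nhds 1))
    (hf : ∀ x, f x = l (Real.exp x))
    (hfnn : ∀ x, 0 ≤ f x)
    (hlb : ∀ r : ℝ, ∃ C : ℝ, ∀ x ∈ Set.Icc (0:ℝ) r, f x ≤ C)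
    (htail : (fun x => (μ (Set.Ioi x)).toReal) ~[atTop]
      (fun x => Real.exp (-α * x) * f x)) :
    (∫⁻ y in Set.Ioi (0:ℝ), ENNReal.ofReal (Real.exp (α * y)) ∂μ = ⊤) ↔
    (∫⁻ y in Set.Ioi (0:ℝ), ENNReal.ofReal (f y) = ⊤) :=
  exp_moment_infinite_iff_general μ α hα f hfnn hlb htail
end

section
/- Suppose a distribution V on ℝ satisfies V̄(x) ∼ exp{−αx + Cx^β + D} for constants α > 0, C > 0, β ∈ (0,1), D ∈ ℝ, and let Y₁, Y₂ be i.i.d. with distribution V (non-lattice). Then there exists a function ξ₁: [0,∞) → (0,1) such that P(Y₁+Y₂ > x) ∼ α x · exp{−αx + C((1−ξ₁(x))^β + ξ₁(x)^β) x^β + 2D} as x → ∞. -/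
open Filter MeasureTheory Asymptotics

section TwoFoldAux

/-- Concavity pairing: `t^β + (1-t)^β` is monotone up to 1/2. -/
lemma pair_rpow_mono {β : ℝ} (hβ0 : 0 < β) (hβ1 : β < 1) {t u : ℝ}
    (ht : 0 ≤ t) (htu : t ≤ u) (hu : u ≤ 1/2) :
    t ^ β + (1 - t) ^ β ≤ u ^ β + (1 - u) ^ β := by
  rcases eq_or_lt_of_le htu with rfl | hlt
  · exact le_refl _
  have h2t : 0 < 1 - 2 * t := by linarith
  set b : ℝ := (u - t) / (1 - 2 * t) with hbdef
  have hb0 : 0 ≤ b := div_nonneg (by linarith) h2t.le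
  have hbm : b * (1 - 2 * t) = u - t := div_mul_cancel₀ _ h2t.ne'
  have hb1 : b ≤ 1 := by nlinarith
  have hcc := (Real.concaveOn_rpow hβ0.le hβ1.le).2
  have hmem1 : t ∈ Set.Ici (0:ℝ) := ht
  have hmem2 : (1 - t) ∈ Set.Ici (0:ℝ) := by simp; linarith
  have k1 := hcc hmem1 hmem2 (a := 1 - b) (b := b) (by linarith) hb0 (by ring)
  have k2 := hcc hmem2 hmem1 (a := 1 - b) (b := b) (by linarith) hb0 (by ring)
  have e1 : (1 - b) • t + b • (1 - t) = u := by
    simp only [smul_eq_mul]; linear_combination hbm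
  have e2 : (1 - b) • (1 - t) + b • t = 1 - u := by
    simp only [smul_eq_mul]; linear_combination -hbm
  rw [e1] at k1; rw [e2] at k2
  simp only [smul_eq_mul] at k1 k2
  nlinarith [k1, k2]

lemma pair_rpow_strict {β : ℝ} (hβ0 : 0 < β) (hβ1 : β < 1) {θ : ℝ}
    (hθ0 : 0 < θ) (hθ : θ ≤ 1/4) :
    (1/2 - θ) ^ β + (1/2 + θ) ^ β < 2 * (1/2 : ℝ) ^ β := by
  have hsc := (Real.strictConcaveOn_rpow hβ0 hβ1).2
  have hmem1 : (1/2 - θ : ℝ) ∈ Set.Ici (0:ℝ) := by simp; linarith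
  have hmem2 : (1/2 + θ : ℝ) ∈ Set.Ici (0:ℝ) := by simp; linarith
  have hne : (1/2 - θ : ℝ) ≠ 1/2 + θ := by intro h; linarith
  have k := hsc hmem1 hmem2 hne (a := 1/2) (b := 1/2) (by norm_num) (by norm_num) (by norm_num)
  simp only [smul_eq_mul] at k
  have : (1:ℝ)/2 * (1/2 - θ) + 1/2 * (1/2 + θ) = 1/2 := by ring
  rw [this] at k
  linarith

/-- scaled two-point bound: for `0 ≤ k ≤ x`, `k^β + (x-k)^β ≤ s * x^β` where
`s = (1/2-θ)^β + (1/2+θ)^β` provided `k` is outside the middle window, and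
always `≤ 2 (1/2)^β x^β`. -/
lemma phi_le_aux {β : ℝ} (hβ0 : 0 < β) (hβ1 : β < 1) {t θ : ℝ}
    (ht0 : 0 ≤ t) (ht1 : t ≤ 1) (hθ0 : 0 ≤ θ) (hθ : θ ≤ 1/4)
    (h : t ≤ 1/2 - θ ∨ 1/2 + θ ≤ t) :
    t ^ β + (1 - t) ^ β ≤ (1/2 - θ) ^ β + (1/2 + θ) ^ β := by
  rcases h with h | h
  · have := pair_rpow_mono hβ0 hβ1 ht0 h (by linarith)
    have e : (1 : ℝ) - (1/2 - θ) = 1/2 + θ := by ring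
    rwa [e] at this
  · have h1t : (0:ℝ) ≤ 1 - t := by linarith
    have h2 : 1 - t ≤ 1/2 - θ := by linarith
    have := pair_rpow_mono hβ0 hβ1 h1t h2 (by linarith)
    have e : (1 : ℝ) - (1 - t) = t := by ring
    have e2 : (1 : ℝ) - (1/2 - θ) = 1/2 + θ := by ring
    rw [e, e2] at this
    linarith

lemma phi_scale {β x k : ℝ} (hβ0 : 0 < β) (hx : 0 < x) (hk0 : 0 ≤ k) (hk1 : k ≤ x) :
    k ^ β + (x - k) ^ β = ((k/x) ^ β + (1 - k/x) ^ β) * x ^ β := by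
  have hxne : x ≠ 0 := hx.ne'
  have e1 : k = (k/x) * x := by field_simp
  have e2 : x - k = (1 - k/x) * x := by field_simp
  rw [show k ^ β = ((k/x) * x) ^ β by rw [← e1],
      show (x - k) ^ β = ((1 - k/x) * x) ^ β by rw [← e2],
      Real.mul_rpow (div_nonneg hk0 hx.le) hx.le,
      Real.mul_rpow (by
        have : k/x ≤ 1 := (div_le_one hx).2 hk1
        linarith : (0:ℝ) ≤ 1 - k/x) hx.le]
  ring

lemma tendsto_poly_mul_exp_neg {β g : ℝ} (hβ0 : 0 < β) (hg : 0 < g) :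
    Tendsto (fun x : ℝ => x * Real.exp (-(g * x ^ β))) atTop (nhds 0) := by
  have h1 : Tendsto (fun x : ℝ => Real.log x - g * x ^ β) atTop atBot := by
    have hlo := isLittleO_log_rpow_atTop hβ0
    have hev : ∀ᶠ x : ℝ in atTop, Real.log x - g * x ^ β ≤ -(g/2) * x ^ β := by
      filter_upwards [hlo.def (by positivity : (0:ℝ) < g/2), eventually_ge_atTop (1:ℝ)]
        with x hx hx1
      have hxb : (0:ℝ) ≤ x ^ β := Real.rpow_nonneg (by linarith) β
      rw [Real.norm_eq_abs, Real.norm_eq_abs, abs_of_nonneg hxb] at hx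
      have := abs_le.1 hx
      nlinarith [this.2]
    refine tendsto_atBot_mono' atTop hev ?_
    have h3 : Tendsto (fun x : ℝ => (g/2) * x ^ β) atTop atTop :=
      (tendsto_rpow_atTop hβ0).const_mul_atTop (by positivity)
    exact (tendsto_neg_atTop_atBot.comp h3).congr (fun x => by
      simp [Function.comp, neg_mul])
  have h2 : Tendsto (fun x : ℝ => Real.exp (Real.log x - g * x ^ β)) atTop (nhds 0) :=
    Real.tendsto_exp_atBot.comp h1
  refine h2.congr' ?_
  filter_upwards [eventually_gt_atTop (0:ℝ)] with x hx
  rw [Real.exp_sub, Real.exp_log hx, Real.exp_neg]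
  ring

end TwoFoldAux

/-- A measure on `ℝ` is lattice if it is concentrated on `{a + n d : n ∈ ℤ}`
for some `d > 0`. -/
def IsLatticeMeasure (μ : Measure ℝ) : Prop :=
  ∃ a d : ℝ, 0 < d ∧ μ (Set.range fun n : ℤ => a + n * d) = 1

set_option maxHeartbeats 2000000 in
/-- For `V` with `V̄(x) ∼ exp(-αx + Cx^β + D)` (`α, C > 0`, `0 < β < 1`) and `Y₁, Y₂`
i.i.d. with non-lattice distribution `V`, there is `ξ₁ : [0,∞) → (0,1)` with
`P(Y₁+Y₂ > x) ∼ α x exp(-αx + C((1-ξ₁(x))^β + ξ₁(x)^β) x^β + 2D)`. -/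
theorem two_fold_conv_tail_Weibull_like (μ : Measure ℝ) [IsProbabilityMeasure μ]
    (α C D β : ℝ) (hα : 0 < α) (hC : 0 < C) (hβ : β ∈ Set.Ioo (0:ℝ) 1)
    (hnl : ¬ IsLatticeMeasure μ)
    (htail : (fun x => (μ (Set.Ioi x)).toReal) ~[atTop]
      (fun x => Real.exp (-α * x + C * x ^ β + D))) :
    ∃ ξ : ℝ → ℝ, (∀ x : ℝ, 0 ≤ x → ξ x ∈ Set.Ioo (0:ℝ) 1) ∧
      (fun x => ((μ.prod μ) {p : ℝ × ℝ | x < p.1 + p.2}).toReal) ~[atTop]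
        (fun x => α * x *
          Real.exp (-α * x + C * ((1 - ξ x) ^ β + (ξ x) ^ β) * x ^ β + 2 * D)) := by
  obtain ⟨hβ0, hβ1⟩ := hβ
  set E : ℝ → ℝ := fun y => Real.exp (-α * y + C * y ^ β + D) with hEdef
  set P : ℝ → ℝ := fun x => ((μ.prod μ) {p : ℝ × ℝ | x < p.1 + p.2}).toReal with hPdef
  have hEpos : ∀ y, 0 < E y := fun y => Real.exp_pos _
  set s₂ : ℝ := 2 * (1/2 : ℝ) ^ β with hs₂def
  have hhalf : (1/2:ℝ) < (1/2:ℝ) ^ β := by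
    have := Real.rpow_lt_rpow_of_exponent_gt (x := (1/2:ℝ)) (by norm_num) (by norm_num) hβ1
    simpa using this
  have hs₂1 : 1 < s₂ := by rw [hs₂def]; linarith
  have hs₂2 : s₂ ≤ 2 := by
    have : (1/2:ℝ) ^ β ≤ 1 := Real.rpow_le_one (by norm_num) (by norm_num) hβ0.le
    rw [hs₂def]; linarith
  -- Step 1: two-sided tail bounds beyond some M ≥ 1
  obtain ⟨M, hM1, hMb⟩ : ∃ M : ℝ, 1 ≤ M ∧ ∀ y, M ≤ y →
      (μ (Set.Ioi y)).toReal ≤ 2 * E y ∧ E y / 2 ≤ (μ (Set.Ioi y)).toReal := by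
    have hev := htail.isLittleO.def (by norm_num : (0:ℝ) < 1/2)
    rw [eventually_atTop] at hev
    obtain ⟨M₀, hM₀⟩ := hev
    refine ⟨max M₀ 1, le_max_right _ _, fun y hy => ?_⟩
    have h := hM₀ y (le_trans (le_max_left _ _) hy)
    simp only [Real.norm_eq_abs] at h
    have hE : |Real.exp (-α * y + C * y ^ β + D)| = E y := abs_of_pos (hEpos y)
    rw [hE] at h
    rw [show ((fun x => (μ (Set.Ioi x)).toReal) - E) y
      = (μ (Set.Ioi y)).toReal - E y from rfl] at h
    have := abs_le.1 h
    constructor <;> [linarith [this.2]; linarith [this.1]]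
  -- Step 2: uniform bound on closed tails for y ≥ 0
  set K₁ : ℝ := max (2 * Real.exp α) (Real.exp (α * (M + 1) - D)) with hK₁def
  have hK₁pos : 0 < K₁ := lt_of_lt_of_le (by positivity) (le_max_left _ _)
  have hIci : ∀ y : ℝ, 0 ≤ y → (μ (Set.Ici y)).toReal ≤ K₁ * E y := by
    intro y hy0
    rcases le_or_gt (M + 1) y with hy | hy
    · have hsub : Set.Ici y ⊆ Set.Ioi (y - 1) := fun z hz => by
        simp only [Set.mem_Ioi]; have : y ≤ z := hz; linarith
      have h1 : (μ (Set.Ici y)).toReal ≤ (μ (Set.Ioi (y-1))).toReal :=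
        ENNReal.toReal_mono (measure_ne_top _ _) (measure_mono hsub)
      have h2 : (μ (Set.Ioi (y-1))).toReal ≤ 2 * E (y-1) := (hMb (y-1) (by linarith)).1
      have h3 : E (y-1) ≤ Real.exp α * E y := by
        rw [hEdef]
        simp only
        rw [← Real.exp_add]
        apply Real.exp_le_exp.2
        have hrp : (y-1) ^ β ≤ y ^ β :=
          Real.rpow_le_rpow (by linarith) (by linarith) hβ0.le
        nlinarith [hrp]
      calc (μ (Set.Ici y)).toReal ≤ 2 * E (y-1) := le_trans h1 h2
        _ ≤ 2 * Real.exp α * E y := by nlinarith [hEpos y, hEpos (y-1)]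
        _ ≤ K₁ * E y := by
            have := le_max_left (2 * Real.exp α) (Real.exp (α * (M + 1) - D))
            nlinarith [hEpos y]
    · have h1 : (μ (Set.Ici y)).toReal ≤ 1 := by
        rw [← ENNReal.toReal_one]
        exact ENNReal.toReal_mono (by simp) prob_le_one
      have h2 : 1 ≤ Real.exp (α * (M + 1) - D) * E y := by
        rw [hEdef]
        simp only
        rw [← Real.exp_add]
        have hbp : 0 ≤ C * y ^ β := by positivity
        have : (0:ℝ) ≤ α * (M + 1) - D + (-α * y + C * y ^ β + D) := by nlinarith
        calc (1:ℝ) = Real.exp 0 := (Real.exp_zero).symm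
          _ ≤ _ := Real.exp_le_exp.2 this
      have h3 : Real.exp (α * (M + 1) - D) * E y ≤ K₁ * E y := by
        have := le_max_right (2 * Real.exp α) (Real.exp (α * (M + 1) - D))
        nlinarith [hEpos y]
      linarith
  -- Step 3: lower bound
  have hlow : ∀ᶠ x in atTop, Real.exp (-α * x + C * s₂ * x ^ β + 2 * D) / 4 ≤ P x := by
    filter_upwards [eventually_ge_atTop (2 * M)] with x hx
    have hx0 : 0 < x := by linarith
    have hsub : (Set.Ioi (x/2)) ×ˢ (Set.Ioi (x/2)) ⊆ {p : ℝ × ℝ | x < p.1 + p.2} := by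
      rintro ⟨p1, p2⟩ ⟨h1, h2⟩
      simp only [Set.mem_Ioi] at h1 h2
      simp only [Set.mem_setOf_eq]
      linarith
    have h1 : ((μ.prod μ) ((Set.Ioi (x/2)) ×ˢ (Set.Ioi (x/2)))).toReal ≤ P x :=
      ENNReal.toReal_mono (measure_ne_top _ _) (measure_mono hsub)
    rw [Measure.prod_prod, ENNReal.toReal_mul] at h1
    have h3 : E (x/2) / 2 ≤ (μ (Set.Ioi (x/2))).toReal := (hMb _ (by linarith)).2
    have hnn : (0:ℝ) ≤ E (x/2) / 2 := by positivity
    have h4 : E (x/2) / 2 * (E (x/2) / 2) ≤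
        (μ (Set.Ioi (x/2))).toReal * (μ (Set.Ioi (x/2))).toReal :=
      mul_le_mul h3 h3 hnn (le_trans hnn h3)
    have h5 : E (x/2) * E (x/2) = Real.exp (-α * x + C * s₂ * x ^ β + 2 * D) := by
      rw [hEdef]
      simp only
      rw [← Real.exp_add]
      congr 1
      have hsp : (x/2) ^ β = (1/2 : ℝ) ^ β * x ^ β := by
        rw [show x/2 = (1/2 : ℝ) * x by ring, Real.mul_rpow (by norm_num) hx0.le]
      rw [hsp, hs₂def]
      ring
    have : E (x/2) / 2 * (E (x/2) / 2) = Real.exp (-α * x + C * s₂ * x ^ β + 2 * D) / 4 := by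
      rw [← h5]; ring
    linarith
  -- Step 4: upper bound
  classical
  set K₂ : ℝ := K₁ ^ 2 * Real.exp (α + 2 * D) with hK₂def
  have hK₂pos : 0 < K₂ := by positivity
  set θ : ℝ := min (1/4) (α / (32 * (K₂ * Real.exp (-(2 * D))) + 1)) with hθdef
  have hKe : 0 < K₂ * Real.exp (-(2 * D)) := by positivity
  have hθ0 : 0 < θ := lt_min (by norm_num) (by positivity)
  have hθ4 : θ ≤ 1/4 := min_le_left _ _
  have hθsmall : 2 * θ * (K₂ * Real.exp (-(2 * D))) ≤ α / 16 := by
    have h1 : θ ≤ α / (32 * (K₂ * Real.exp (-(2 * D))) + 1) := min_le_right _ _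
    have h2 : θ * (32 * (K₂ * Real.exp (-(2 * D))) + 1) ≤ α :=
      (le_div_iff₀ (by positivity)).1 h1
    nlinarith [hKe, hα, hθ0]
  set s₁ : ℝ := (1/2 - θ) ^ β + (1/2 + θ) ^ β with hs₁def
  have hs₁lt : s₁ < s₂ := by
    rw [hs₁def, hs₂def]; exact pair_rpow_strict hβ0 hβ1 hθ0 hθ4
  -- structural bound
  have hstruct : ∀ x : ℝ, 2 * M + 2 ≤ x → P x ≤
      2 * E x + 2 * (Real.exp (α * M) * Real.exp (-α * x + C * x ^ β + D)) +
      K₂ * Real.exp (-α * x) *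
        ((x + 1) * Real.exp (C * s₁ * x ^ β) + (2 * θ * x + 1) * Real.exp (C * s₂ * x ^ β)) := by
    intro x hx
    have hx0 : 0 < x := by linarith
    have hxM : M ≤ x := by linarith
    set K : ℕ := ⌊x - M⌋₊ with hKdef
    have hKle : (K : ℝ) ≤ x - M := Nat.floor_le (by linarith)
    -- covering
    have hcov : {p : ℝ × ℝ | x < p.1 + p.2} ⊆
        ((Set.univ ×ˢ Set.Ioi x) ∪ ((Set.Ioi (x - M)) ×ˢ Set.univ)) ∪
        ⋃ k ∈ Finset.range (K + 1), (Set.Ici (k : ℝ)) ×ˢ (Set.Ioi (x - k - 1)) := by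
      rintro ⟨p1, p2⟩ hp
      simp only [Set.mem_setOf_eq] at hp
      by_cases h1 : x - M < p1
      · exact Or.inl (Or.inr ⟨h1, trivial⟩)
      push_neg at h1
      by_cases h2 : p1 ≤ 0
      · exact Or.inl (Or.inl ⟨trivial, by simp only [Set.mem_Ioi]; linarith⟩)
      push_neg at h2
      refine Or.inr (Set.mem_iUnion₂.2 ⟨⌊p1⌋₊, ?_, ?_, ?_⟩)
      · exact Finset.mem_coe.2 (Finset.mem_range.2 (Nat.lt_succ_of_le (Nat.floor_mono h1)))
      · exact Nat.floor_le h2.le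
      · simp only [Set.mem_Ioi]
        have := Nat.lt_floor_add_one p1
        push_cast
        linarith
    -- measure bound in ℝ≥0∞
    have hm1 : (μ.prod μ) {p : ℝ × ℝ | x < p.1 + p.2} ≤
        μ (Set.Ioi x) + μ (Set.Ioi (x - M)) +
        ∑ k ∈ Finset.range (K + 1), μ (Set.Ici (k : ℝ)) * μ (Set.Ioi (x - k - 1)) := by
      have step1 : (μ.prod μ) {p : ℝ × ℝ | x < p.1 + p.2} ≤
          (μ.prod μ) (Set.univ ×ˢ Set.Ioi x) + (μ.prod μ) ((Set.Ioi (x - M)) ×ˢ Set.univ) +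
          ∑ k ∈ Finset.range (K + 1),
            (μ.prod μ) ((Set.Ici (k : ℝ)) ×ˢ (Set.Ioi (x - k - 1))) := by
        refine le_trans (measure_mono hcov) ?_
        refine le_trans (measure_union_le _ _) ?_
        exact add_le_add (measure_union_le _ _) (measure_biUnion_finset_le _ _)
      simp only [Measure.prod_prod, measure_univ, one_mul, mul_one] at step1
      exact step1
    have hrhs_ne : μ (Set.Ioi x) + μ (Set.Ioi (x - M)) +
        ∑ k ∈ Finset.range (K + 1), μ (Set.Ici (k : ℝ)) * μ (Set.Ioi (x - k - 1)) ≠ ⊤ := by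
      refine ENNReal.add_ne_top.2 ⟨ENNReal.add_ne_top.2 ⟨measure_ne_top _ _, measure_ne_top _ _⟩, ?_⟩
      refine ENNReal.sum_ne_top.2 fun k _ => ENNReal.mul_ne_top (measure_ne_top _ _) (measure_ne_top _ _)
    have hPle : P x ≤ (μ (Set.Ioi x)).toReal + (μ (Set.Ioi (x - M))).toReal +
        ∑ k ∈ Finset.range (K + 1), (μ (Set.Ici (k : ℝ))).toReal * (μ (Set.Ioi (x - k - 1))).toReal := by
      have := ENNReal.toReal_mono hrhs_ne hm1
      rw [ENNReal.toReal_add (ENNReal.add_ne_top.2 ⟨measure_ne_top _ _, measure_ne_top _ _⟩)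
        (ENNReal.sum_ne_top.2 fun k _ => ENNReal.mul_ne_top (measure_ne_top _ _) (measure_ne_top _ _)),
        ENNReal.toReal_add (measure_ne_top _ _) (measure_ne_top _ _),
        ENNReal.toReal_sum (fun k _ => ENNReal.mul_ne_top (measure_ne_top _ _) (measure_ne_top _ _))] at this
      simpa only [ENNReal.toReal_mul] using this
    -- bound the two tail pieces
    have hp1 : (μ (Set.Ioi x)).toReal ≤ 2 * E x := (hMb x hxM).1
    have hp2 : (μ (Set.Ioi (x - M))).toReal ≤
        2 * (Real.exp (α * M) * Real.exp (-α * x + C * x ^ β + D)) := by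
      refine le_trans (hMb (x - M) (by linarith)).1 ?_
      have hrp : (x - M) ^ β ≤ x ^ β := Real.rpow_le_rpow (by linarith) (by linarith) hβ0.le
      rw [hEdef]
      simp only
      rw [← Real.exp_add]
      have : 2 * Real.exp (-α * (x - M) + C * (x - M) ^ β + D) ≤
          2 * Real.exp (α * M + (-α * x + C * x ^ β + D)) := by
        have := Real.exp_le_exp.2 (show -α * (x - M) + C * (x - M) ^ β + D ≤
          α * M + (-α * x + C * x ^ β + D) by nlinarith)
        linarith
      linarith
    -- termwise bound for the sum
    have hterm : ∀ k ∈ Finset.range (K + 1),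
        (μ (Set.Ici (k : ℝ))).toReal * (μ (Set.Ioi (x - k - 1))).toReal ≤
        K₂ * Real.exp (-α * x) *
          (if ((k:ℝ) < x/2 - θ * x ∨ x/2 + θ * x < (k:ℝ))
            then Real.exp (C * s₁ * x ^ β) else Real.exp (C * s₂ * x ^ β)) := by
      intro k hk
      have hkK : (k : ℝ) ≤ x - M := by
        have : k ≤ K := Nat.lt_succ_iff.1 (Finset.mem_range.1 hk)
        calc (k:ℝ) ≤ K := Nat.cast_le.2 this
          _ ≤ x - M := hKle
      have hk0 : (0:ℝ) ≤ k := Nat.cast_nonneg k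
      have hxk1 : (0:ℝ) ≤ x - k - 1 := by linarith
      have t1 : (μ (Set.Ici (k:ℝ))).toReal ≤ K₁ * E k := hIci _ hk0
      have t2 : (μ (Set.Ioi (x - k - 1))).toReal ≤ K₁ * E (x - k - 1) := by
        refine le_trans (ENNReal.toReal_mono (measure_ne_top _ _)
          (measure_mono Set.Ioi_subset_Ici_self)) (hIci _ hxk1)
      have hnn1 : (0:ℝ) ≤ (μ (Set.Ici (k:ℝ))).toReal := ENNReal.toReal_nonneg
      have hprod : (μ (Set.Ici (k : ℝ))).toReal * (μ (Set.Ioi (x - k - 1))).toReal ≤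
          (K₁ * E k) * (K₁ * E (x - k - 1)) :=
        mul_le_mul t1 t2 ENNReal.toReal_nonneg (le_trans hnn1 t1)
      refine le_trans hprod ?_
      -- now pure analysis
      have hq : (k:ℝ) ^ β + (x - k - 1) ^ β ≤
          (if ((k:ℝ) < x/2 - θ * x ∨ x/2 + θ * x < (k:ℝ)) then s₁ else s₂) * x ^ β := by
        have hstep : (x - k - 1) ^ β ≤ (x - k) ^ β :=
          Real.rpow_le_rpow hxk1 (by linarith) hβ0.le
        have hkx : (k:ℝ) ≤ x := by linarith
        have hscale := phi_scale (x := x) (k := (k:ℝ)) hβ0 hx0 hk0 hkx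
        have ht0 : (0:ℝ) ≤ (k:ℝ)/x := div_nonneg hk0 hx0.le
        have ht1 : (k:ℝ)/x ≤ 1 := (div_le_one hx0).2 hkx
        have hxβ : (0:ℝ) ≤ x ^ β := Real.rpow_nonneg hx0.le β
        by_cases hout : ((k:ℝ) < x/2 - θ * x ∨ x/2 + θ * x < (k:ℝ))
        · rw [if_pos hout]
          have htt : (k:ℝ)/x ≤ 1/2 - θ ∨ 1/2 + θ ≤ (k:ℝ)/x := by
            rcases hout with h | h
            · left
              rw [div_le_iff₀ hx0]
              nlinarith
            · right
              rw [le_div_iff₀ hx0]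
              nlinarith
          have := phi_le_aux hβ0 hβ1 ht0 ht1 hθ0.le hθ4 htt
          have h2 : ((k:ℝ)/x) ^ β + (1 - (k:ℝ)/x) ^ β ≤ s₁ := by rw [hs₁def]; exact this
          calc (k:ℝ) ^ β + (x - k - 1) ^ β ≤ (k:ℝ) ^ β + (x - k) ^ β := by linarith
            _ = (((k:ℝ)/x) ^ β + (1 - (k:ℝ)/x) ^ β) * x ^ β := hscale
            _ ≤ s₁ * x ^ β := mul_le_mul_of_nonneg_right h2 hxβ
        · rw [if_neg hout]
          have htt : (k:ℝ)/x ≤ 1/2 - 0 ∨ 1/2 + 0 ≤ (k:ℝ)/x := by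
            rcases le_total ((k:ℝ)/x) (1/2) with h | h
            · left; linarith
            · right; linarith
          have := phi_le_aux hβ0 hβ1 ht0 ht1 le_rfl (by norm_num) htt
          have h2 : ((k:ℝ)/x) ^ β + (1 - (k:ℝ)/x) ^ β ≤ s₂ := by
            rw [hs₂def]
            have e : (1/2 - 0 : ℝ) ^ β + (1/2 + 0 : ℝ) ^ β = 2 * (1/2:ℝ) ^ β := by
              norm_num; ring
            rw [e] at this
            exact this
          calc (k:ℝ) ^ β + (x - k - 1) ^ β ≤ (k:ℝ) ^ β + (x - k) ^ β := by linarith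
            _ = (((k:ℝ)/x) ^ β + (1 - (k:ℝ)/x) ^ β) * x ^ β := hscale
            _ ≤ s₂ * x ^ β := mul_le_mul_of_nonneg_right h2 hxβ
      -- convert to exponential inequality
      have hmain : ∀ s : ℝ, (k:ℝ) ^ β + (x - k - 1) ^ β ≤ s * x ^ β →
          K₁ * E (k:ℝ) * (K₁ * E (x - k - 1)) ≤
            K₂ * Real.exp (-α * x) * Real.exp (C * s * x ^ β) := by
        intro s hs
        rw [hEdef, hK₂def]
        simp only
        calc K₁ * Real.exp (-α * (k:ℝ) + C * (k:ℝ) ^ β + D) *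
              (K₁ * Real.exp (-α * (x - k - 1) + C * (x - k - 1) ^ β + D))
            = K₁ ^ 2 * Real.exp ((-α * (k:ℝ) + C * (k:ℝ) ^ β + D) +
                (-α * (x - k - 1) + C * (x - k - 1) ^ β + D)) := by
              simp only [Real.exp_add]; ring
          _ ≤ K₁ ^ 2 * Real.exp (α + 2 * D + -α * x + C * s * x ^ β) := by
              refine mul_le_mul_of_nonneg_left (Real.exp_le_exp.2 ?_) (sq_nonneg _)
              have := mul_le_mul_of_nonneg_left hs hC.le
              linarith
          _ = K₁ ^ 2 * Real.exp (α + 2 * D) * Real.exp (-α * x) * Real.exp (C * s * x ^ β) := by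
              simp only [Real.exp_add]; ring
      by_cases hout : ((k:ℝ) < x/2 - θ * x ∨ x/2 + θ * x < (k:ℝ))
      · rw [if_pos hout] at hq ⊢
        exact hmain s₁ hq
      · rw [if_neg hout] at hq ⊢
        exact hmain s₂ hq
    -- sum up
    refine le_trans hPle (add_le_add (add_le_add hp1 hp2) ?_)
    refine le_trans (Finset.sum_le_sum hterm) ?_
    rw [← Finset.mul_sum]
    have hsplit : ∑ k ∈ Finset.range (K + 1),
        (if ((k:ℝ) < x/2 - θ * x ∨ x/2 + θ * x < (k:ℝ))
          then Real.exp (C * s₁ * x ^ β) else Real.exp (C * s₂ * x ^ β)) ≤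
        (x + 1) * Real.exp (C * s₁ * x ^ β) + (2 * θ * x + 1) * Real.exp (C * s₂ * x ^ β) := by
      rw [Finset.sum_ite]
      rw [Finset.sum_const, Finset.sum_const]
      simp only [nsmul_eq_mul]
      have c1 : ((Finset.filter (fun k : ℕ => ((k:ℝ) < x/2 - θ * x ∨ x/2 + θ * x < (k:ℝ)))
          (Finset.range (K + 1))).card : ℝ) ≤ x + 1 := by
        have h1 : (Finset.filter (fun k : ℕ => ((k:ℝ) < x/2 - θ * x ∨ x/2 + θ * x < (k:ℝ)))
            (Finset.range (K + 1))).card ≤ K + 1 := by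
          calc _ ≤ (Finset.range (K+1)).card := Finset.card_filter_le _ _
            _ = K + 1 := Finset.card_range _
        calc ((Finset.filter _ _).card : ℝ) ≤ ((K + 1 : ℕ) : ℝ) := Nat.cast_le.2 h1
          _ = (K:ℝ) + 1 := by push_cast; ring
          _ ≤ x + 1 := by linarith [hM1]
      have c2 : ((Finset.filter (fun k : ℕ => ¬((k:ℝ) < x/2 - θ * x ∨ x/2 + θ * x < (k:ℝ)))
          (Finset.range (K + 1))).card : ℝ) ≤ 2 * θ * x + 1 := by
        set m₁ : ℕ := ⌈x/2 - θ * x⌉₊ with hm₁def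
        set m₂ : ℕ := ⌊x/2 + θ * x⌋₊ with hm₂def
        have hsub : (Finset.filter (fun k : ℕ => ¬((k:ℝ) < x/2 - θ * x ∨ x/2 + θ * x < (k:ℝ)))
            (Finset.range (K + 1))) ⊆ Finset.Icc m₁ m₂ := by
          intro k hk
          rw [Finset.mem_filter] at hk
          push_neg at hk
          obtain ⟨-, hk1, hk2⟩ := hk
          rw [Finset.mem_Icc]
          exact ⟨Nat.ceil_le.2 hk1, Nat.le_floor hk2⟩
        have hcard : (Finset.filter _ _).card ≤ (Finset.Icc m₁ m₂).card :=
          Finset.card_le_card hsub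
        rw [Nat.card_Icc] at hcard
        have hθx : (0:ℝ) ≤ θ * x := by positivity
        rcases le_or_gt m₁ (m₂ + 1) with hmm | hmm
        · have hcast : ((m₂ + 1 - m₁ : ℕ) : ℝ) = (m₂ : ℝ) + 1 - m₁ := by
            push_cast [Nat.cast_sub hmm]; ring
          have hm₂le : (m₂ : ℝ) ≤ x/2 + θ * x := Nat.floor_le (by positivity)
          have hm₁ge : x/2 - θ * x ≤ (m₁ : ℝ) := Nat.le_ceil _
          calc ((Finset.filter _ _).card : ℝ) ≤ ((m₂ + 1 - m₁ : ℕ) : ℝ) := Nat.cast_le.2 hcard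
            _ = (m₂ : ℝ) + 1 - m₁ := hcast
            _ ≤ 2 * θ * x + 1 := by linarith
        · have : m₂ + 1 - m₁ = 0 := by omega
          rw [this] at hcard
          have : (Finset.filter _ _).card = 0 := Nat.le_zero.1 hcard
          rw [this]
          push_cast
          linarith
      have he1 : (0:ℝ) ≤ Real.exp (C * s₁ * x ^ β) := (Real.exp_pos _).le
      have he2 : (0:ℝ) ≤ Real.exp (C * s₂ * x ^ β) := (Real.exp_pos _).le
      refine add_le_add (mul_le_mul_of_nonneg_right c1 he1) (mul_le_mul_of_nonneg_right c2 he2)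
    refine mul_le_mul_of_nonneg_left hsplit (by positivity)
  have key : ∀ A g : ℝ, 0 ≤ A → 0 < g →
      ∀ᶠ x in atTop, A * ((x + 1) * Real.exp (-(g * x ^ β))) ≤ α / 8 * x := by
    intro A g hA hg
    have h2 : Tendsto (fun x : ℝ => Real.exp (-(g * x ^ β))) atTop (nhds 0) := by
      have h4 : Tendsto (fun x : ℝ => g * x ^ β) atTop atTop :=
        (tendsto_rpow_atTop hβ0).const_mul_atTop hg
      exact Real.tendsto_exp_atBot.comp (tendsto_neg_atTop_atBot.comp h4)
    have h1 := tendsto_poly_mul_exp_neg hβ0 hg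
    have h6 : Tendsto (fun x : ℝ => x * Real.exp (-(g * x ^ β)) + Real.exp (-(g * x ^ β)))
        atTop (nhds 0) := by
      have := h1.add h2
      simpa using this
    have h5 : Tendsto (fun x : ℝ => A * ((x + 1) * Real.exp (-(g * x ^ β)))) atTop (nhds 0) := by
      have h7 := h6.const_mul A
      rw [mul_zero] at h7
      exact h7.congr (fun x => by ring)
    have h8 : ∀ᶠ x in atTop, A * ((x + 1) * Real.exp (-(g * x ^ β))) ≤ 1 :=
      h5.eventually (eventually_le_nhds one_pos)
    filter_upwards [h8, eventually_ge_atTop (8 / α)] with x h8x hx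
    have : (1:ℝ) ≤ α / 8 * x := by
      rw [div_le_iff₀ hα] at hx
      nlinarith
    linarith
  have hup : ∀ᶠ x in atTop, P x ≤ α / 2 * x * Real.exp (-α * x + C * s₂ * x ^ β + 2 * D) := by
    have hg1 : (0:ℝ) < C * (s₂ - 1) := by nlinarith
    have hg3 : (0:ℝ) < C * (s₂ - s₁) := by nlinarith
    filter_upwards [key (2 * Real.exp (-D)) (C * (s₂ - 1)) (by positivity) hg1,
      key (2 * Real.exp (α * M - D)) (C * (s₂ - 1)) (by positivity) hg1,
      key (K₂ * Real.exp (-(2 * D))) (C * (s₂ - s₁)) (by positivity) hg3,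
      eventually_ge_atTop (2 * M + 2),
      eventually_ge_atTop (16 * (K₂ * Real.exp (-(2 * D))) / α)] with x k1 k2 k3 hx2M hxK
    have hx0 : (0:ℝ) < x := by linarith
    have hT : (0:ℝ) < Real.exp (-α * x + C * s₂ * x ^ β + 2 * D) := Real.exp_pos _
    have hPx := hstruct x hx2M
    -- piece 1
    have pb1 : 2 * E x ≤ α / 8 * x * Real.exp (-α * x + C * s₂ * x ^ β + 2 * D) := by
      have e1 : E x = Real.exp (-D) * Real.exp (-(C * (s₂ - 1) * x ^ β)) *
          Real.exp (-α * x + C * s₂ * x ^ β + 2 * D) := by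
        rw [hEdef]
        simp only
        rw [← Real.exp_add, ← Real.exp_add]
        congr 1
        ring
      have step1 : 2 * Real.exp (-D) * Real.exp (-(C * (s₂ - 1) * x ^ β)) ≤
          (2 * Real.exp (-D)) * ((x + 1) * Real.exp (-(C * (s₂ - 1) * x ^ β))) := by
        nlinarith [mul_nonneg (mul_nonneg (Real.exp_pos (-D)).le
          (Real.exp_pos (-(C * (s₂ - 1) * x ^ β))).le) hx0.le]
      calc 2 * E x = (2 * Real.exp (-D) * Real.exp (-(C * (s₂ - 1) * x ^ β))) *
            Real.exp (-α * x + C * s₂ * x ^ β + 2 * D) := by rw [e1]; ring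
        _ ≤ (α / 8 * x) * Real.exp (-α * x + C * s₂ * x ^ β + 2 * D) :=
            mul_le_mul_of_nonneg_right (le_trans step1 k1) hT.le
        _ = α / 8 * x * Real.exp (-α * x + C * s₂ * x ^ β + 2 * D) := by ring
    -- piece 2
    have pb2 : 2 * (Real.exp (α * M) * Real.exp (-α * x + C * x ^ β + D)) ≤
        α / 8 * x * Real.exp (-α * x + C * s₂ * x ^ β + 2 * D) := by
      have e2 : Real.exp (α * M) * Real.exp (-α * x + C * x ^ β + D) =
          Real.exp (α * M - D) * Real.exp (-(C * (s₂ - 1) * x ^ β)) *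
          Real.exp (-α * x + C * s₂ * x ^ β + 2 * D) := by
        rw [← Real.exp_add, ← Real.exp_add, ← Real.exp_add]
        congr 1
        ring
      have step1 : 2 * (Real.exp (α * M - D) * Real.exp (-(C * (s₂ - 1) * x ^ β))) ≤
          (2 * Real.exp (α * M - D)) * ((x + 1) * Real.exp (-(C * (s₂ - 1) * x ^ β))) := by
        nlinarith [mul_nonneg (mul_nonneg (Real.exp_pos (α * M - D)).le
          (Real.exp_pos (-(C * (s₂ - 1) * x ^ β))).le) hx0.le]
      calc 2 * (Real.exp (α * M) * Real.exp (-α * x + C * x ^ β + D))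
          = (2 * (Real.exp (α * M - D) * Real.exp (-(C * (s₂ - 1) * x ^ β)))) *
            Real.exp (-α * x + C * s₂ * x ^ β + 2 * D) := by rw [e2]; ring
        _ ≤ (α / 8 * x) * Real.exp (-α * x + C * s₂ * x ^ β + 2 * D) :=
            mul_le_mul_of_nonneg_right (le_trans step1 k2) hT.le
        _ = α / 8 * x * Real.exp (-α * x + C * s₂ * x ^ β + 2 * D) := by ring
    -- piece 3
    have pb3 : K₂ * Real.exp (-α * x) * ((x + 1) * Real.exp (C * s₁ * x ^ β)) ≤
        α / 8 * x * Real.exp (-α * x + C * s₂ * x ^ β + 2 * D) := by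
      have e3 : Real.exp (-α * x) * Real.exp (C * s₁ * x ^ β) =
          Real.exp (-(2 * D)) * Real.exp (-(C * (s₂ - s₁) * x ^ β)) *
          Real.exp (-α * x + C * s₂ * x ^ β + 2 * D) := by
        rw [← Real.exp_add, ← Real.exp_add, ← Real.exp_add]
        congr 1
        ring
      calc K₂ * Real.exp (-α * x) * ((x + 1) * Real.exp (C * s₁ * x ^ β))
          = ((K₂ * Real.exp (-(2 * D))) * ((x + 1) * Real.exp (-(C * (s₂ - s₁) * x ^ β)))) *
            Real.exp (-α * x + C * s₂ * x ^ β + 2 * D) := by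
            rw [show K₂ * Real.exp (-α * x) * ((x + 1) * Real.exp (C * s₁ * x ^ β)) =
              K₂ * (x + 1) * (Real.exp (-α * x) * Real.exp (C * s₁ * x ^ β)) by ring, e3]
            ring
        _ ≤ (α / 8 * x) * Real.exp (-α * x + C * s₂ * x ^ β + 2 * D) :=
            mul_le_mul_of_nonneg_right k3 hT.le
        _ = α / 8 * x * Real.exp (-α * x + C * s₂ * x ^ β + 2 * D) := by ring
    -- piece 4
    have pb4 : K₂ * Real.exp (-α * x) * ((2 * θ * x + 1) * Real.exp (C * s₂ * x ^ β)) ≤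
        α / 8 * x * Real.exp (-α * x + C * s₂ * x ^ β + 2 * D) := by
      have e4 : Real.exp (-α * x) * Real.exp (C * s₂ * x ^ β) =
          Real.exp (-(2 * D)) * Real.exp (-α * x + C * s₂ * x ^ β + 2 * D) := by
        rw [← Real.exp_add, ← Real.exp_add]
        congr 1
        ring
      have hcoef : K₂ * Real.exp (-(2 * D)) * (2 * θ * x + 1) ≤ α / 8 * x := by
        have h1 : K₂ * Real.exp (-(2 * D)) * (2 * θ * x) ≤ α / 16 * x := by
          nlinarith [hθsmall, hx0.le]
        have h2 : K₂ * Real.exp (-(2 * D)) ≤ α / 16 * x := by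
          rw [div_le_iff₀ hα] at hxK
          nlinarith
        nlinarith
      calc K₂ * Real.exp (-α * x) * ((2 * θ * x + 1) * Real.exp (C * s₂ * x ^ β))
          = (K₂ * Real.exp (-(2 * D)) * (2 * θ * x + 1)) *
            Real.exp (-α * x + C * s₂ * x ^ β + 2 * D) := by
            rw [show K₂ * Real.exp (-α * x) * ((2 * θ * x + 1) * Real.exp (C * s₂ * x ^ β)) =
              K₂ * (2 * θ * x + 1) * (Real.exp (-α * x) * Real.exp (C * s₂ * x ^ β)) by ring, e4]
            ring
        _ ≤ (α / 8 * x) * Real.exp (-α * x + C * s₂ * x ^ β + 2 * D) :=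
            mul_le_mul_of_nonneg_right hcoef hT.le
        _ = α / 8 * x * Real.exp (-α * x + C * s₂ * x ^ β + 2 * D) := by ring
    have hdist : K₂ * Real.exp (-α * x) *
        ((x + 1) * Real.exp (C * s₁ * x ^ β) + (2 * θ * x + 1) * Real.exp (C * s₂ * x ^ β)) =
        K₂ * Real.exp (-α * x) * ((x + 1) * Real.exp (C * s₁ * x ^ β)) +
        K₂ * Real.exp (-α * x) * ((2 * θ * x + 1) * Real.exp (C * s₂ * x ^ β)) := by ring
    rw [hdist] at hPx
    calc P x ≤ _ := hPx
      _ ≤ α / 8 * x * Real.exp (-α * x + C * s₂ * x ^ β + 2 * D) +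
          α / 8 * x * Real.exp (-α * x + C * s₂ * x ^ β + 2 * D) +
          (α / 8 * x * Real.exp (-α * x + C * s₂ * x ^ β + 2 * D) +
           α / 8 * x * Real.exp (-α * x + C * s₂ * x ^ β + 2 * D)) :=
          add_le_add (add_le_add pb1 pb2) (add_le_add pb3 pb4)
      _ = α / 2 * x * Real.exp (-α * x + C * s₂ * x ^ β + 2 * D) := by ring
  -- Step 5: sandwich
  have hsand : ∀ᶠ x in atTop, 0 < x ∧
      α * x * Real.exp (-α * x + C * 1 * x ^ β + 2 * D) < P x ∧
      P x < α * x * Real.exp (-α * x + C * s₂ * x ^ β + 2 * D) := by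
    have hg1 : (0:ℝ) < C * (s₂ - 1) := by nlinarith
    have hlt1 : ∀ᶠ x in atTop,
        4 * α * (x * Real.exp (-(C * (s₂ - 1) * x ^ β))) < 1 := by
      have h1 := (tendsto_poly_mul_exp_neg hβ0 hg1).const_mul (4 * α)
      rw [mul_zero] at h1
      exact h1.eventually (eventually_lt_nhds one_pos)
    filter_upwards [hlow, hup, hlt1, eventually_gt_atTop (0:ℝ)] with x hlo hu hl1 hx0
    have hT : (0:ℝ) < Real.exp (-α * x + C * s₂ * x ^ β + 2 * D) := Real.exp_pos _
    refine ⟨hx0, ?_, ?_⟩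
    · have e1 : α * x * Real.exp (-α * x + C * 1 * x ^ β + 2 * D) =
          (α * x * Real.exp (-(C * (s₂ - 1) * x ^ β))) *
          Real.exp (-α * x + C * s₂ * x ^ β + 2 * D) := by
        rw [show α * x * Real.exp (-(C * (s₂ - 1) * x ^ β)) *
            Real.exp (-α * x + C * s₂ * x ^ β + 2 * D) =
            α * x * (Real.exp (-(C * (s₂ - 1) * x ^ β)) *
              Real.exp (-α * x + C * s₂ * x ^ β + 2 * D)) by ring, ← Real.exp_add]
        congr 2
        ring
      have h2 : α * x * Real.exp (-(C * (s₂ - 1) * x ^ β)) < 1 / 4 := by linarith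
      calc α * x * Real.exp (-α * x + C * 1 * x ^ β + 2 * D)
          = (α * x * Real.exp (-(C * (s₂ - 1) * x ^ β))) *
            Real.exp (-α * x + C * s₂ * x ^ β + 2 * D) := e1
        _ < 1 / 4 * Real.exp (-α * x + C * s₂ * x ^ β + 2 * D) :=
            mul_lt_mul_of_pos_right h2 hT
        _ = Real.exp (-α * x + C * s₂ * x ^ β + 2 * D) / 4 := by ring
        _ ≤ P x := hlo
    · have : α / 2 * x * Real.exp (-α * x + C * s₂ * x ^ β + 2 * D) <
          α * x * Real.exp (-α * x + C * s₂ * x ^ β + 2 * D) := by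
        nlinarith
      linarith
  -- Step 6: define ξ by IVT and choice
  refine ⟨fun x => if h : ∃ t ∈ Set.Ioo (0:ℝ) (1/2),
      α * x * Real.exp (-α * x + C * ((1 - t) ^ β + t ^ β) * x ^ β + 2 * D) = P x
    then h.choose else 1/4, fun x _ => ?_, ?_⟩
  · dsimp only
    split
    · next h =>
      obtain ⟨h1, h2⟩ := h.choose_spec.1
      exact ⟨h1, h2.trans (by norm_num)⟩
    · constructor <;> norm_num
  · refine Filter.EventuallyEq.isEquivalent ?_
    filter_upwards [hsand] with x hx
    obtain ⟨hx0, hlo, hhi⟩ := hx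
    have hsumc : Continuous fun t : ℝ => (1 - t) ^ β + t ^ β :=
      ((continuous_const.sub continuous_id).rpow_const (fun t => Or.inr hβ0.le)).add
        (continuous_id.rpow_const (fun t => Or.inr hβ0.le))
    have hHc : Continuous fun t : ℝ =>
        α * x * Real.exp (-α * x + C * ((1 - t) ^ β + t ^ β) * x ^ β + 2 * D) :=
      continuous_const.mul (Real.continuous_exp.comp
        ((continuous_const.add ((continuous_const.mul hsumc).mul continuous_const)).add
          continuous_const))
    have hend0 : α * x * Real.exp (-α * x + C * ((1 - (0:ℝ)) ^ β + (0:ℝ) ^ β) * x ^ β + 2 * D)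
        = α * x * Real.exp (-α * x + C * 1 * x ^ β + 2 * D) := by
      rw [show ((1 - (0:ℝ)) ^ β + (0:ℝ) ^ β) = 1 by
        rw [sub_zero, Real.one_rpow, Real.zero_rpow hβ0.ne']; ring]
    have hend12 : α * x *
        Real.exp (-α * x + C * ((1 - (1/2:ℝ)) ^ β + (1/2:ℝ) ^ β) * x ^ β + 2 * D)
        = α * x * Real.exp (-α * x + C * s₂ * x ^ β + 2 * D) := by
      rw [show ((1 - (1/2:ℝ)) ^ β + (1/2:ℝ) ^ β) = s₂ by
        rw [hs₂def]; norm_num; ring]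
    have hmem : P x ∈ Set.Ioo
        (α * x * Real.exp (-α * x + C * ((1 - (0:ℝ)) ^ β + (0:ℝ) ^ β) * x ^ β + 2 * D))
        (α * x * Real.exp (-α * x + C * ((1 - (1/2:ℝ)) ^ β + (1/2:ℝ) ^ β) * x ^ β + 2 * D)) := by
      rw [hend0, hend12]
      exact ⟨hlo, hhi⟩
    have hivt := intermediate_value_Ioo (by norm_num : (0:ℝ) ≤ 1/2) hHc.continuousOn hmem
    obtain ⟨t, htIoo, htEq⟩ := hivt
    have hEx : ∃ t ∈ Set.Ioo (0:ℝ) (1/2),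
        α * x * Real.exp (-α * x + C * ((1 - t) ^ β + t ^ β) * x ^ β + 2 * D) = P x :=
      ⟨t, htIoo, htEq⟩
    show P x = _
    rw [dif_pos hEx]
    exact (hEx.choose_spec.2).symm
end
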